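/- If U is a generalized Clifford operator on ℂ^d ⊗ ℂ^d and |Ψ(U†)⟩ := (U†⊗I)(|Φ_d⟩^{AR_A}|Φ_d⟩^{BR_B}), then for every generalized Pauli σ_{pq} acting on R_B there exist a phase θ and Pauli indices (p',q'), (r',s') such that (I ⊗ σ_{pq}^{R_B})|Ψ(U†)⟩ = e^{iθ}(σ_{p'q'}^A ⊗ σ_{r's'}^B ⊗ I^{R_AR_B})|Ψ(U†)⟩. Consequently, for the reduced state on A R_A R_B: σ_{pq}^{R_B} Ψ(U†)^{AR_AR_B} σ_{pq}^{†R_B} = σ_{p'q'}^A Ψ(U†)^{AR_AR_B} σ_{p'q'}^{†A}. -/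

import Mathlib

open scoped BigOperators Kronecker ComplexOrder
open Matrix Complex MeasureTheory

noncomputable section

/-- The maximally entangled state `|Φ_d⟩ = (1/√d) Σ_t |t⟩⊗|t⟩` as a vector on `Fin d × Fin d`. -/
def Phi (d : ℕ) : Fin d × Fin d → ℂ := fun p => if p.1 = p.2 then ((1 / Real.sqrt d : ℝ) : ℂ) else 0

/-- Action of `E ⊗ I` on a bipartite vector. -/
def actL {d : ℕ} (E : Matrix (Fin d) (Fin d) ℂ) (v : Fin d × Fin d → ℂ) : Fin d × Fin d → ℂ :=
  fun p => ∑ a', E p.1 a' * v (a', p.2)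

/-- Action of `I ⊗ F` on a bipartite vector. -/
def actR {d : ℕ} (F : Matrix (Fin d) (Fin d) ℂ) (v : Fin d × Fin d → ℂ) : Fin d × Fin d → ℂ :=
  fun p => ∑ b', F p.2 b' * v (p.1, b')

/-- Outer product `|v⟩⟨v|`. -/
def outer {ι : Type*} [Fintype ι] (v : ι → ℂ) : Matrix ι ι ℂ := Matrix.of fun i j => v i * star (v j)

open Classical in
/-- Positive-semidefinite square root, extended by `0` off the PSD cone. -/
def psqrt {n : Type*} [Fintype n] [DecidableEq n] (A : Matrix n n ℂ) : Matrix n n ℂ :=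
  if h : A.PosSemidef then (h.1.eigenvectorUnitary : Matrix n n ℂ) *
    diagonal ((↑) ∘ (√·) ∘ h.1.eigenvalues) * (star h.1.eigenvectorUnitary : Matrix n n ℂ) else 0

/-- Trace norm `‖A‖₁ = Tr √(AᴴA)`. -/
def traceNorm {n : Type*} [Fintype n] [DecidableEq n] (A : Matrix n n ℂ) : ℝ :=
  (psqrt (Aᴴ * A)).trace.re

/-- Uhlmann fidelity `F(ρ,σ) = (Tr √(√ρ σ √ρ))²`. -/
def fid {n : Type*} [Fintype n] [DecidableEq n] (ρ σ : Matrix n n ℂ) : ℝ :=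
  ((psqrt (psqrt ρ * σ * psqrt ρ)).trace.re) ^ 2

/-- Von Neumann entropy of a Hermitian matrix, `S(ρ) = -Σ λᵢ log λᵢ`. -/
def vN {n : Type*} [Fintype n] [DecidableEq n] {ρ : Matrix n n ℂ} (h : ρ.IsHermitian) : ℝ :=
  -∑ i, h.eigenvalues i * Real.log (h.eigenvalues i)

/-- Cyclic shift `X|t⟩ = |t-1⟩`, i.e. `X = Σ_t |t⟩⟨t+1|`. -/
def Xop (d : ℕ) [NeZero d] : Matrix (Fin d) (Fin d) ℂ :=
  Matrix.of fun t t' => if t' = t + 1 then 1 else 0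

/-- Clock operator `Z = Σ_t e^{2πit/d}|t⟩⟨t|`. -/
def Zop (d : ℕ) [NeZero d] : Matrix (Fin d) (Fin d) ℂ :=
  Matrix.of fun t t' => if t = t' then Complex.exp (2 * Real.pi * Complex.I * ((t : ℕ) : ℂ) / d) else 0

/-- Generalized Pauli operator `σ_{pq} = X^p Z^q`. -/
def pauli (d : ℕ) [NeZero d] (p q : Fin d) : Matrix (Fin d) (Fin d) ℂ :=
  Xop d ^ (p : ℕ) * Zop d ^ (q : ℕ)

/-- `|Ψ(U)⟩ = (U^{AB} ⊗ I^{R_A R_B})(|Φ_d⟩^{AR_A} ⊗ |Φ_d⟩^{BR_B})`, indexed `((a,r_A),(b,r_B))`. -/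
def PsiVec {d : ℕ} (U : Matrix (Fin d × Fin d) (Fin d × Fin d) ℂ) :
    (Fin d × Fin d) × (Fin d × Fin d) → ℂ :=
  fun x => ∑ a', ∑ b', U (x.1.1, x.2.1) (a', b') * Phi d (a', x.1.2) * Phi d (b', x.2.2)

/-- Reduced density matrix on the first factor of a bipartite pure state. -/
def redFst {ι κ : Type*} [Fintype ι] [Fintype κ] (v : ι × κ → ℂ) : Matrix ι ι ℂ :=
  Matrix.of fun x x' => ∑ y, v (x, y) * star (v (x', y))

/-- Reduced density matrix on the second factor of a bipartite pure state. -/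
def redSnd {ι κ : Type*} [Fintype ι] [Fintype κ] (v : ι × κ → ℂ) : Matrix κ κ ℂ :=
  Matrix.of fun y y' => ∑ x, v (x, y) * star (v (x, y'))

/-!
Conjugation by a unitary is injective and distinct two-qudit Paulis are never proportional, so a
Clifford `U` permutes the Paulis up to phases; in particular `1 ⊗ σ_{-p,q}` is, up to a phase,
`U (σ_{p'q'} ⊗ σ_{r's'}) U†`. By the ricochet property of `|Φ_d⟩`, `σ_{pq}` on `R_B` acts on
`|Ψ(U†)⟩` as `U† (1 ⊗ σ_{pq}ᵀ)` on the systems, and `σ_{pq}ᵀ = ω^{qp} σ_{-p,q}`; this is the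
replacement identity. In the reduced state on `A R_A R_B` the unitary `σ_{r's'}` on the traced-out
system `B` and the phase cancel.
-/

namespace Matrix

variable {α : Type*} [Semiring α] {k m n : Type*} [Fintype m] [Fintype n]

theorem one_kronecker_mul_apply [DecidableEq m] (T : Matrix n n α) (M : Matrix (m × n) k α)
    (i : m) (j : n) (y : k) : ((1 : Matrix m m α) ⊗ₖ T * M) (i, j) y = ∑ u, T j u * M (i, u) y := by
  simp [mul_apply, Fintype.sum_prod_type, one_apply, ite_mul]

theorem kronecker_one_mul_apply [DecidableEq n] (P : Matrix m m α) (M : Matrix (m × n) k α)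
    (i : m) (j : n) (y : k) : (P ⊗ₖ (1 : Matrix n n α) * M) (i, j) y = ∑ a, P i a * M (a, j) y := by
  simp [mul_apply, Fintype.sum_prod_type, one_apply, ite_mul]

theorem mul_one_kronecker_apply [DecidableEq m] (M : Matrix k (m × n) α) (T : Matrix n n α)
    (y : k) (i : m) (j : n) : (M * (1 : Matrix m m α) ⊗ₖ T) y (i, j) = ∑ u, M y (i, u) * T u j := by
  simp [mul_apply, Fintype.sum_prod_type, one_apply]

theorem kronecker_mul_apply (P : Matrix m m α) (Q : Matrix n n α) (M : Matrix (m × n) k α)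
    (i : m) (j : n) (y : k) :
    (P ⊗ₖ Q * M) (i, j) y = ∑ a, ∑ b, P i a * Q j b * M (a, b) y := by
  simp [mul_apply, Fintype.sum_prod_type]

theorem mul_mul_conjTranspose_eq_of_mul_eq_smul {n k : Type*} [Fintype n] [Fintype k]
    [DecidableEq k] {L R : Matrix n n ℂ} {W : Matrix n k ℂ} {Q : Matrix k k ℂ} {c : ℂ}
    (hQ : Q * Qᴴ = 1) (hc : c * star c = 1) (h : L * W = c • (R * W * Q)) :
    L * (W * Wᴴ) * Lᴴ = R * (W * Wᴴ) * Rᴴ := by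
  calc L * (W * Wᴴ) * Lᴴ = (L * W) * (L * W)ᴴ := by
        rw [conjTranspose_mul]; simp only [Matrix.mul_assoc]
    _ = (c * star c) • (R * W * (Q * Qᴴ) * Wᴴ * Rᴴ) := by
        rw [h, conjTranspose_smul, Matrix.smul_mul, Matrix.mul_smul, smul_smul]
        simp only [conjTranspose_mul, Matrix.mul_assoc]
    _ = R * (W * Wᴴ) * Rᴴ := by
        rw [hc, hQ, one_smul]; simp only [Matrix.mul_one, Matrix.mul_assoc]

variable {n : Type*} [Fintype n] [DecidableEq n] {U : Matrix n n ℂ}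

theorem conjTranspose_mul_conj (hU : U ∈ unitaryGroup n ℂ) (A : Matrix n n ℂ) :
    Uᴴ * (U * A * Uᴴ) = A * Uᴴ := by
  rw [← Matrix.mul_assoc, ← Matrix.mul_assoc, ← star_eq_conjTranspose,
    mem_unitaryGroup_iff'.mp hU, Matrix.one_mul]

theorem conjTranspose_mul_conj_mul (hU : U ∈ unitaryGroup n ℂ) (A : Matrix n n ℂ) :
    Uᴴ * (U * A * Uᴴ) * U = A := by
  rw [conjTranspose_mul_conj hU, Matrix.mul_assoc, ← star_eq_conjTranspose,
    mem_unitaryGroup_iff'.mp hU, Matrix.mul_one]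

end Matrix

def NormalizesUpToPhase {n ι : Type*} [Fintype n] (U : Matrix n n ℂ) (P : ι → Matrix n n ℂ) :
    Prop :=
  ∀ i, ∃ j, ∃ θ : ℝ, U * P i * Uᴴ = Complex.exp (θ * Complex.I) • P j

theorem NormalizesUpToPhase.exists_preimage {n ι : Type*} [Fintype n] [DecidableEq n] [Finite ι]
    {U : Matrix n n ℂ} {P : ι → Matrix n n ℂ} (hUP : NormalizesUpToPhase U P)
    (hU : U ∈ Matrix.unitaryGroup n ℂ) (hP : ∀ i j (c : ℂ), P i = c • P j → i = j) (j : ι) :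
    ∃ i, ∃ θ : ℝ, U * P i * Uᴴ = Complex.exp (θ * Complex.I) • P j := by
  choose f θ hf using hUP
  suffices hinj : Function.Injective f by
    obtain ⟨i, rfl⟩ := (Finite.injective_iff_surjective.mp hinj) j
    exact ⟨i, θ i, hf i⟩
  have hP_eq : ∀ i, P i = Complex.exp (θ i * Complex.I) • (Uᴴ * P (f i) * U) := fun i => by
    rw [← Matrix.smul_mul, ← Matrix.mul_smul, ← hf, Matrix.conjTranspose_mul_conj_mul hU]
  intro i i' hii'
  apply hP i i' (Complex.exp ((θ i - θ i' : ℝ) * Complex.I))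
  rw [hP_eq i, hP_eq i', hii', smul_smul, ← Complex.exp_add]
  congr 2
  push_cast
  ring

namespace Pauli

variable (d : ℕ)

def ω : ℂ := Complex.exp (2 * Real.pi * Complex.I / d)

theorem ω_pow_ne_zero (n : ℕ) : ω d ^ n ≠ 0 :=
  pow_ne_zero _ (Complex.exp_ne_zero _)

theorem exists_ω_pow_eq_exp (n : ℕ) : ∃ φ : ℝ, ω d ^ n = Complex.exp (φ * Complex.I) :=
  ⟨2 * Real.pi * n / d, by rw [ω, ← Complex.exp_nat_mul]; push_cast; ring_nf⟩

variable [NeZero d]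

theorem isPrimitiveRoot_ω : IsPrimitiveRoot (ω d) d :=
  Complex.isPrimitiveRoot_exp d (NeZero.ne d)

theorem ω_pow_mod (n : ℕ) : ω d ^ (n % d) = ω d ^ n := by
  rw [← pow_mod_orderOf (ω d) n, ← (isPrimitiveRoot_ω d).eq_orderOf]

theorem ω_pow_val_add (a b : Fin d) : ω d ^ (a + b).val = ω d ^ a.val * ω d ^ b.val := by
  rw [Fin.val_add, ω_pow_mod, pow_add]

theorem ω_pow_val_mul (a b : Fin d) : ω d ^ (a * b).val = ω d ^ (a.val * b.val) := by
  rw [Fin.val_mul, ω_pow_mod]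

theorem ω_pow_val_injective : Function.Injective fun a : Fin d => ω d ^ a.val :=
  fun _ _ h => Fin.ext ((isPrimitiveRoot_ω d).pow_inj (Fin.isLt _) (Fin.isLt _) h)

end Pauli

section GeneralizedPauli

open Pauli Fin.NatCast Fin.CommRing

theorem Zop_eq_diagonal (d : ℕ) [NeZero d] : Zop d = diagonal fun t : Fin d => ω d ^ t.val := by
  ext t t'
  simp only [Zop, ω, diagonal_apply, of_apply, ← Complex.exp_nat_mul]
  split_ifs
  · ring_nf
  · rfl

variable {d : ℕ} [NeZero d]

theorem Xop_pow_apply (m : ℕ) (t t' : Fin d) :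
    (Xop d ^ m) t t' = if t' = t + (m : Fin d) then 1 else 0 := by
  induction m generalizing t' with
  | zero => simp only [pow_zero, Nat.cast_zero, add_zero, one_apply, eq_comm]
  | succ m ih =>
    rw [pow_succ, mul_apply, Finset.sum_eq_single (t + (m : Fin d))]
    · rw [ih, if_pos rfl, one_mul]
      simp [Xop, add_assoc]
    · intro s _ hs
      rw [ih, if_neg hs, zero_mul]
    · simp

def twoQuditPauli (d : ℕ) [NeZero d] (i : (Fin d × Fin d) × (Fin d × Fin d)) :
    Matrix (Fin d × Fin d) (Fin d × Fin d) ℂ :=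
  pauli d i.1.1 i.1.2 ⊗ₖ pauli d i.2.1 i.2.2

theorem pauli_apply (p q t t' : Fin d) :
    pauli d p q t t' = if t' = t + p then ω d ^ (q * t').val else 0 := by
  rw [pauli, Zop_eq_diagonal, diagonal_pow, mul_diagonal, Xop_pow_apply, Fin.cast_val_eq_self,
    Pi.pow_apply, ← pow_mul, ← ω_pow_val_mul, boole_mul, mul_comm t' q]

theorem pauli_zero_zero : pauli d 0 0 = 1 := by
  simp [pauli]

theorem pauli_mem_unitaryGroup (p q : Fin d) : pauli d p q ∈ unitaryGroup (Fin d) ℂ := by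
  rw [mem_unitaryGroup_iff', star_eq_conjTranspose]
  ext t t'
  rw [mul_apply, Finset.sum_eq_single (t - p)]
  · simp only [conjTranspose_apply, pauli_apply, sub_add_cancel, if_true, one_apply]
    by_cases h : t = t'
    · rw [← h, if_pos rfl, if_pos rfl, Complex.star_def, Complex.conj_mul', norm_pow,
        (isPrimitiveRoot_ω d).norm'_eq_one (NeZero.ne d)]
      simp
    · rw [if_neg (Ne.symm h), if_neg h, mul_zero]
  · intro s _ hs
    simp only [conjTranspose_apply, pauli_apply]
    rw [if_neg (fun h => hs (by rw [h, add_sub_cancel_right])), star_zero, zero_mul]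
  · simp

theorem pauli_transpose (p q : Fin d) :
    (pauli d p q)ᵀ = ω d ^ (q * p).val • pauli d (-p) q := by
  ext t t'
  simp only [transpose_apply, Matrix.smul_apply, smul_eq_mul, pauli_apply]
  by_cases h : t = t' + p
  · rw [if_pos h, if_pos (by rw [h]; ring), h, mul_add, ω_pow_val_add, mul_comm]
  · rw [if_neg h, if_neg (fun h' => h (by rw [h']; ring)), mul_zero]

theorem eq_of_twoQuditPauli_eq_smul {i j : (Fin d × Fin d) × (Fin d × Fin d)} {c : ℂ}
    (h : twoQuditPauli d i = c • twoQuditPauli d j) : i = j := by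
  obtain ⟨⟨p, q⟩, r, s⟩ := i
  obtain ⟨⟨p', q'⟩, r', s'⟩ := j
  have hentry : ∀ t u : Fin d, ω d ^ (q * t).val * ω d ^ (s * u).val =
      c * (pauli d p' q' (t - p) t * pauli d r' s' (u - r) u) := fun t u => by
    have h := congr_fun₂ h (t - p, u - r) (t, u)
    rwa [twoQuditPauli, twoQuditPauli, Matrix.smul_apply, kronecker_apply, kronecker_apply,
      pauli_apply p q, pauli_apply r s, if_pos (sub_add_cancel t p).symm,
      if_pos (sub_add_cancel u r).symm] at h
  have hnz : ∀ t u : Fin d, ω d ^ (q * t).val * ω d ^ (s * u).val ≠ 0 := fun t u =>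
    mul_ne_zero (ω_pow_ne_zero d _) (ω_pow_ne_zero d _)
  obtain rfl : p = p' := by
    by_contra hp
    refine hnz 0 0 ?_
    rw [hentry, pauli_apply, if_neg (fun h' => hp (by linear_combination h')), zero_mul,
      mul_zero]
  obtain rfl : r = r' := by
    by_contra hr
    refine hnz 0 0 ?_
    rw [hentry, pauli_apply r' s', if_neg (fun h' => hr (by linear_combination h')), mul_zero,
      mul_zero]
  simp only [pauli_apply, sub_add_cancel, if_true] at hentry
  obtain rfl : c = 1 := by simpa using (hentry 0 0).symm
  obtain rfl : q = q' := ω_pow_val_injective d (by simpa using hentry 1 0)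
  obtain rfl : s = s' := ω_pow_val_injective d (by simpa using hentry 0 1)
  rfl

end GeneralizedPauli

section PartialTrace

variable {A RA B RB : Type*} [Fintype A] [Fintype RA] [Fintype B] [Fintype RB] [DecidableEq A]
  [DecidableEq RA] [DecidableEq B] [DecidableEq RB]

theorem conj_reducedState_eq_of_eq_smul (Ψ : (A × RA) × (B × RB) → ℂ) {T : Matrix RB RB ℂ}
    {P : Matrix A A ℂ} {Q : Matrix B B ℂ} {c : ℂ} (hQ : Q ∈ unitaryGroup B ℂ) (hc : ‖c‖ = 1)
    (h : (fun x : (A × RA) × (B × RB) => ∑ r', T x.2.2 r' * Ψ (x.1, (x.2.1, r'))) =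
      c • fun x : (A × RA) × (B × RB) =>
        ∑ a', ∑ b', P x.1.1 a' * Q x.2.1 b' * Ψ ((a', x.1.2), (b', x.2.2))) :
    let ρ : Matrix ((A × RA) × RB) ((A × RA) × RB) ℂ :=
      of fun x x' => ∑ b, Ψ (x.1, (b, x.2)) * star (Ψ (x'.1, (b, x'.2)))
    ((1 : Matrix (A × RA) (A × RA) ℂ) ⊗ₖ T) * ρ * ((1 : Matrix (A × RA) (A × RA) ℂ) ⊗ₖ T)ᴴ =
      ((P ⊗ₖ (1 : Matrix RA RA ℂ)) ⊗ₖ (1 : Matrix RB RB ℂ)) * ρ *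
        ((P ⊗ₖ (1 : Matrix RA RA ℂ)) ⊗ₖ (1 : Matrix RB RB ℂ))ᴴ := by
  intro ρ
  let W : Matrix ((A × RA) × RB) B ℂ := of fun x b => Ψ (x.1, (b, x.2))
  have hρ : ρ = W * Wᴴ := by
    ext x x'
    simp [ρ, W, mul_apply]
  have hW : (1 : Matrix (A × RA) (A × RA) ℂ) ⊗ₖ T * W =
      c • ((P ⊗ₖ (1 : Matrix RA RA ℂ)) ⊗ₖ (1 : Matrix RB RB ℂ) * W * Qᵀ) := by
    ext ⟨⟨a, rA⟩, rB⟩ b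
    have hRW : ∀ b',
        ((P ⊗ₖ (1 : Matrix RA RA ℂ)) ⊗ₖ (1 : Matrix RB RB ℂ) * W) ((a, rA), rB) b' =
          ∑ a', P a a' * Ψ ((a', rA), (b', rB)) := fun b' => by
      simp [W, mul_apply, Fintype.sum_prod_type, one_apply]
    rw [one_kronecker_mul_apply, Matrix.smul_apply, smul_eq_mul, mul_apply]
    simp only [W, of_apply, hRW, transpose_apply, Finset.sum_mul]
    rw [congr_fun h ((a, rA), (b, rB)), Pi.smul_apply, smul_eq_mul, Finset.sum_comm]
    congr 1
    exact Finset.sum_congr rfl fun _ _ => Finset.sum_congr rfl fun _ _ => by ring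
  have hQt : Qᵀ * Qᵀᴴ = 1 :=
    mem_unitaryGroup_iff.mp (transpose_mem_unitaryGroup_iff.mpr hQ)
  have hc' : c * star c = 1 := by
    rw [Complex.star_def, Complex.mul_conj', hc, Complex.ofReal_one, one_pow]
  rw [hρ]
  exact mul_mul_conjTranspose_eq_of_mul_eq_smul hQt hc' hW

end PartialTrace

section PsiVec

variable {d : ℕ}

theorem PsiVec_apply (V : Matrix (Fin d × Fin d) (Fin d × Fin d) ℂ)
    (x : (Fin d × Fin d) × (Fin d × Fin d)) :
    PsiVec V x = (d : ℂ)⁻¹ * V (x.1.1, x.2.1) (x.1.2, x.2.2) := by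
  have hΦ : ((1 / Real.sqrt d : ℝ) : ℂ) * ((1 / Real.sqrt d : ℝ) : ℂ) = (d : ℂ)⁻¹ := by
    rw [← Complex.ofReal_mul, div_mul_div_comm, one_mul, Real.mul_self_sqrt (Nat.cast_nonneg d)]
    push_cast
    ring
  simp [PsiVec, Phi, ← hΦ]
  ring

theorem PsiVec_smul (c : ℂ) (V : Matrix (Fin d × Fin d) (Fin d × Fin d) ℂ) :
    PsiVec (c • V) = c • PsiVec V := by
  funext x
  simp only [PsiVec_apply, Matrix.smul_apply, Pi.smul_apply, smul_eq_mul]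
  ring

/-- The ricochet property of `|Φ_d⟩`: an operator on `R_B` acts as its transpose on `B`. -/
theorem PsiVec_mul_one_kronecker_transpose_apply (V : Matrix (Fin d × Fin d) (Fin d × Fin d) ℂ)
    (T : Matrix (Fin d) (Fin d) ℂ) (x : (Fin d × Fin d) × (Fin d × Fin d)) :
    PsiVec (V * (1 : Matrix (Fin d) (Fin d) ℂ) ⊗ₖ Tᵀ) x =
      ∑ r', T x.2.2 r' * PsiVec V (x.1, (x.2.1, r')) := by
  simp only [PsiVec_apply, mul_one_kronecker_apply, transpose_apply, Finset.mul_sum]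
  exact Finset.sum_congr rfl fun _ _ => by ring

theorem PsiVec_kronecker_mul_apply (P Q : Matrix (Fin d) (Fin d) ℂ)
    (V : Matrix (Fin d × Fin d) (Fin d × Fin d) ℂ) (x : (Fin d × Fin d) × (Fin d × Fin d)) :
    PsiVec (P ⊗ₖ Q * V) x =
      ∑ a', ∑ b', P x.1.1 a' * Q x.2.1 b' * PsiVec V ((a', x.1.2), (b', x.2.2)) := by
  simp only [PsiVec_apply, kronecker_mul_apply, Finset.mul_sum]
  exact Finset.sum_congr rfl fun _ _ => Finset.sum_congr rfl fun _ _ => by ring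

theorem sum_mul_PsiVec_eq_smul_of_mul_eq_smul {V : Matrix (Fin d × Fin d) (Fin d × Fin d) ℂ}
    {T P Q : Matrix (Fin d) (Fin d) ℂ} {c : ℂ}
    (h : V * (1 : Matrix (Fin d) (Fin d) ℂ) ⊗ₖ Tᵀ = c • (P ⊗ₖ Q * V)) :
    (fun x : (Fin d × Fin d) × (Fin d × Fin d) =>
      ∑ r', T x.2.2 r' * PsiVec V (x.1, (x.2.1, r'))) =
      c • fun x : (Fin d × Fin d) × (Fin d × Fin d) =>
        ∑ a', ∑ b', P x.1.1 a' * Q x.2.1 b' * PsiVec V ((a', x.1.2), (b', x.2.2)) := by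
  funext x
  rw [← PsiVec_mul_one_kronecker_transpose_apply, h, PsiVec_smul, Pi.smul_apply, Pi.smul_apply,
    PsiVec_kronecker_mul_apply]

end PsiVec

theorem exists_conjTranspose_mul_one_kronecker_pauli_transpose {d : ℕ} [NeZero d]
    {U : Matrix (Fin d × Fin d) (Fin d × Fin d) ℂ} (hU : U ∈ unitaryGroup (Fin d × Fin d) ℂ)
    (hClif : NormalizesUpToPhase U (twoQuditPauli d)) (p q : Fin d) :
    ∃ (θ : ℝ) (p' q' r' s' : Fin d), Uᴴ * (1 : Matrix (Fin d) (Fin d) ℂ) ⊗ₖ (pauli d p q)ᵀ =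
      Complex.exp (θ * Complex.I) • (pauli d p' q' ⊗ₖ pauli d r' s' * Uᴴ) := by
  obtain ⟨⟨⟨p', q'⟩, r', s'⟩, θ, hθ⟩ :=
    hClif.exists_preimage hU (fun _ _ _ => eq_of_twoQuditPauli_eq_smul) ((0, 0), (-p, q))
  obtain ⟨φ, hφ⟩ := Pauli.exists_ω_pow_eq_exp d (q * p).val
  refine ⟨φ - θ, p', q', r', s', ?_⟩
  rw [twoQuditPauli, twoQuditPauli] at hθ
  rw [← conjTranspose_mul_conj hU, hθ, pauli_zero_zero, pauli_transpose, hφ,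
    kronecker_smul, Matrix.mul_smul, Matrix.mul_smul, smul_smul, ← Complex.exp_add]
  congr 2
  push_cast
  ring

/-- for a generalized Clifford `U` and `|Ψ(U†)⟩ = (U†⊗I)(Φ_d ⊗ Φ_d)`,
every Pauli `σ_{pq}` on `R_B` can be replaced by local Paulis on `A` and `B` up to a phase;
consequently conjugating the reduced state `Ψ(U†)^{AR_AR_B}` by `σ_{pq}` on `R_B` equals
conjugating it by `σ_{p'q'}` on `A`. -/
theorem clifford_pauli_replacement (d : ℕ) [NeZero d]
    (U : Matrix (Fin d × Fin d) (Fin d × Fin d) ℂ)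
    (hU : U ∈ Matrix.unitaryGroup (Fin d × Fin d) ℂ)
    (hClif : ∀ p q r s : Fin d, ∃ (p' q' r' s' : Fin d) (θ : ℝ),
      U * (pauli d p q ⊗ₖ pauli d r s) * Uᴴ =
        Complex.exp (θ * Complex.I) • (pauli d p' q' ⊗ₖ pauli d r' s')) :
    ∀ p q : Fin d, ∃ (θ : ℝ) (p' q' r' s' : Fin d),
      ((fun x : (Fin d × Fin d) × (Fin d × Fin d) =>
          ∑ r', pauli d p q x.2.2 r' * PsiVec Uᴴ (x.1, (x.2.1, r')))
        = Complex.exp (θ * Complex.I) •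
          fun x : (Fin d × Fin d) × (Fin d × Fin d) =>
            ∑ a', ∑ b', pauli d p' q' x.1.1 a' * pauli d r' s' x.2.1 b' *
              PsiVec Uᴴ ((a', x.1.2), (b', x.2.2))) ∧
      (let ρ : Matrix ((Fin d × Fin d) × Fin d) ((Fin d × Fin d) × Fin d) ℂ :=
        Matrix.of fun x x' =>
          ∑ b, PsiVec Uᴴ (x.1, (b, x.2)) * star (PsiVec Uᴴ (x'.1, (b, x'.2)))
      ((1 : Matrix (Fin d × Fin d) (Fin d × Fin d) ℂ) ⊗ₖ pauli d p q) * ρ *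
          ((1 : Matrix (Fin d × Fin d) (Fin d × Fin d) ℂ) ⊗ₖ pauli d p q)ᴴ
        = ((pauli d p' q' ⊗ₖ (1 : Matrix (Fin d) (Fin d) ℂ)) ⊗ₖ
              (1 : Matrix (Fin d) (Fin d) ℂ)) * ρ *
            ((pauli d p' q' ⊗ₖ (1 : Matrix (Fin d) (Fin d) ℂ)) ⊗ₖ
              (1 : Matrix (Fin d) (Fin d) ℂ))ᴴ) := by
  intro p q
  have hnorm : NormalizesUpToPhase U (twoQuditPauli d) := fun i => by
    obtain ⟨p', q', r', s', θ, h⟩ := hClif i.1.1 i.1.2 i.2.1 i.2.2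
    exact ⟨((p', q'), (r', s')), θ, h⟩
  obtain ⟨θ, p', q', r', s', hswap⟩ :=
    exists_conjTranspose_mul_one_kronecker_pauli_transpose hU hnorm p q
  have hvec := sum_mul_PsiVec_eq_smul_of_mul_eq_smul hswap
  exact ⟨θ, p', q', r', s', hvec, conj_reducedState_eq_of_eq_smul _
    (pauli_mem_unitaryGroup r' s') (Complex.norm_exp_ofReal_mul_I θ) hvec⟩
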